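/- Let X be a complex Banach space, G ⊆ X a bounded balanced domain, C ⊆ ℂ a convex domain with C ≠ ℂ, and f : G → C a holomorphic function with power series expansion f(x) = f(0) + Σ_{m≥1} (1/m!) D^m f(0)(x^m) in a neighbourhood of the origin. Then for every x ∈ (1/3)·G one has Σ_{m≥1} |(1/m!) D^m f(0)(x^m)| ≤ d(f(0), ∂C), where d(f(0), ∂C) is the Euclidean distance from f(0) to the boundary of C. -/

import Mathlib

/-! Restricting `f` to the complex line through a point `y ∈ G` gives a map `g z = f (z • y)`,
holomorphic on the closed unit disc with values in `C` and Taylor coefficients `p n (y, …, y)`.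
Multiplying `g` by the unimodular constant that turns a supporting half-plane of `C` at the
boundary point nearest to `f 0` into `{Re w < Re g(0) + d}`, `d = d(f 0, ∂C)`, we may assume
`Re g ≤ Re g(0) + d`. Carathéodory's inequality `|aₙ| ≤ 2 (t - Re a₀)` for
`Re g ≤ t` then bounds every coefficient by `2 d`; it follows from writing `aₙ` as the `n`-th
Fourier coefficient of the nonpositive function `2 (Re g - t)` on the unit circle. Finally
`∑_{n ≥ 1} 2 d 3⁻ⁿ = d`. -/

open Complex Metric Real
open scoped ComplexConjugate Pointwise

theorem norm_circleAverage_le {E : Type*} [NormedAddCommGroup E] [NormedSpace ℝ E]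
    (f : ℂ → E) (c : ℂ) (R : ℝ) :
    ‖circleAverage f c R‖ ≤ circleAverage (fun z => ‖f z‖) c R := by
  rw [circleAverage_def, circleAverage_def, norm_smul, smul_eq_mul,
    Real.norm_of_nonneg (by positivity)]
  gcongr
  exact intervalIntegral.norm_integral_le_integral_norm (by positivity)

theorem cauchyPowerSeries_coeff_eq_circleAverage {E : Type*} [NormedAddCommGroup E]
    [NormedSpace ℂ E] (f : ℂ → E) (c : ℂ) {R : ℝ} (hR : R ≠ 0) (n : ℕ) :
    (cauchyPowerSeries f c R).coeff n = circleAverage (fun z => (z - c)⁻¹ ^ n • f z) c R := by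
  rw [FormalMultilinearSeries.coeff, show (1 : Fin n → ℂ) = fun _ => 1 from rfl,
    cauchyPowerSeries_apply, circleAverage_eq_circleIntegral hR]
  simp only [one_div, smul_comm _ (_ ^ n)]

section UnitDisc

variable {g : ℂ → ℂ}

theorem circleAverage_inv_pow_mul_conj_eq_zero (hg : DiffContOnCl ℂ g (ball 0 1))
    {n : ℕ} (hn : n ≠ 0) :
    circleAverage (fun z => z⁻¹ ^ n * conj (g z)) 0 1 = 0 := by
  have hpow : DiffContOnCl ℂ (fun z => z ^ n * g z) (ball 0 |1|) := by
    rw [abs_one]; exact (differentiable_id.pow n).diffContOnCl.smul hg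
  calc circleAverage (fun z => z⁻¹ ^ n * conj (g z)) 0 1
      = circleAverage (conjCLE.toContinuousLinearMap ∘ fun z => z ^ n * g z) 0 1 := by
        refine circleAverage_congr_sphere fun z hz => ?_
        rw [abs_one, mem_sphere_zero_iff_norm] at hz
        simp [inv_eq_conj hz]
    _ = conj (circleAverage (fun z => z ^ n * g z) 0 1) :=
        ContinuousLinearMap.circleAverage_comp_comm _
          (hpow.continuousOn_ball.mono sphere_subset_closedBall).circleIntegrable'
    _ = 0 := by rw [hpow.circleAverage]; simp [hn]

theorem cauchyPowerSeries_coeff_eq_circleAverage_inv_pow_mul_re_sub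
    (hg : DiffContOnCl ℂ g (ball 0 1)) (t : ℝ) {n : ℕ} (hn : n ≠ 0) :
    (cauchyPowerSeries g 0 1).coeff n =
      circleAverage (fun z => z⁻¹ ^ n * ((2 * ((g z).re - t) : ℝ) : ℂ)) 0 1 := by
  have hg_cont : ContinuousOn g (sphere 0 1) := hg.continuousOn_ball.mono sphere_subset_closedBall
  have hpow_cont : ContinuousOn (fun z : ℂ => z⁻¹ ^ n) (sphere 0 1) :=
    (continuousOn_id.inv₀ fun _ hz => ne_of_mem_sphere hz one_ne_zero).pow n
  -- `z⁻¹ ^ n * conj (g z)` and `z⁻¹ ^ n` average to zero, so adding them does not change the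
  -- Cauchy coefficient `circleAverage (z⁻¹ ^ n * g z)`.
  have hsplit : (fun z => z⁻¹ ^ n * ((2 * ((g z).re - t) : ℝ) : ℂ)) =
      (fun z => z⁻¹ ^ n * g z) + (fun z => z⁻¹ ^ n * conj (g z)) -
        (2 * t : ℂ) • fun z => z⁻¹ ^ n * conj 1 := by
    ext z
    simp only [Pi.add_apply, Pi.sub_apply, Pi.smul_apply, smul_eq_mul, map_one]
    have hre := Complex.add_conj (g z)
    push_cast at hre ⊢
    linear_combination -(z⁻¹ ^ n) * hre
  have hint₁ : CircleIntegrable (fun z => z⁻¹ ^ n * g z) 0 1 :=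
    (hpow_cont.mul hg_cont).circleIntegrable zero_le_one
  have hint₂ : CircleIntegrable (fun z => z⁻¹ ^ n * conj (g z)) 0 1 :=
    (hpow_cont.mul (continuous_conj.comp_continuousOn hg_cont)).circleIntegrable zero_le_one
  have hint₃ : CircleIntegrable (fun z => z⁻¹ ^ n * conj (1 : ℂ)) 0 1 :=
    (hpow_cont.mul continuousOn_const).circleIntegrable zero_le_one
  rw [hsplit, circleAverage_sub (hint₁.add hint₂) hint₃.const_smul, circleAverage_add hint₁ hint₂,
    circleAverage_smul, circleAverage_inv_pow_mul_conj_eq_zero hg hn,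
    circleAverage_inv_pow_mul_conj_eq_zero (g := fun _ => 1) diffContOnCl_const hn,
    cauchyPowerSeries_coeff_eq_circleAverage _ _ one_ne_zero]
  simp

/-- Carathéodory's inequality. -/
theorem norm_coeff_le_two_mul_sub_re {q : FormalMultilinearSeries ℂ ℂ ℂ} {t : ℝ}
    (hg : DiffContOnCl ℂ g (ball 0 1)) (hq : HasFPowerSeriesAt g q 0)
    (ht : ∀ z ∈ sphere (0 : ℂ) 1, (g z).re ≤ t) {n : ℕ} (hn : n ≠ 0) :
    ‖q.coeff n‖ ≤ 2 * (t - (g 0).re) := by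
  have hcauchy : q = cauchyPowerSeries g 0 1 := by
    simpa using hq.eq_formalMultilinearSeries
      (hg.hasFPowerSeriesOnBall (R := 1) one_pos).hasFPowerSeriesAt
  have hg_cont : ContinuousOn g (sphere 0 1) := hg.continuousOn_ball.mono sphere_subset_closedBall
  have hdiff : DiffContOnCl ℂ (fun z => 2 * t - 2 * g z) (ball 0 |1|) := by
    rw [abs_one]; exact (hg.const_smul (2 : ℂ)).const_sub _
  calc ‖q.coeff n‖
      ≤ circleAverage (fun z => ‖z⁻¹ ^ n * ((2 * ((g z).re - t) : ℝ) : ℂ)‖) 0 1 := by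
        rw [hcauchy, cauchyPowerSeries_coeff_eq_circleAverage_inv_pow_mul_re_sub hg t hn]
        exact norm_circleAverage_le _ _ _
    _ = circleAverage (reCLM ∘ fun z => 2 * t - 2 * g z) 0 1 := by
        refine circleAverage_congr_sphere fun z hz => ?_
        rw [abs_one, mem_sphere_zero_iff_norm] at hz
        have hz_t : 2 * ((g z).re - t) ≤ 0 := by linarith [ht z (mem_sphere_zero_iff_norm.2 hz)]
        rw [Function.comp_apply, reCLM_apply, norm_mul, norm_pow, norm_inv, hz, inv_one, one_pow,
          one_mul, norm_real, Real.norm_of_nonpos hz_t]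
        simp only [sub_re, mul_re, re_ofNat, im_ofNat, ofReal_re, ofReal_im]
        ring
    _ = 2 * (t - (g 0).re) := by
        have hint : CircleIntegrable (fun z => 2 * t - 2 * g z) 0 1 :=
          (continuousOn_const.sub (continuousOn_const.mul hg_cont)).circleIntegrable zero_le_one
        rw [reCLM.circleAverage_comp_comm hint, hdiff.circleAverage, reCLM_apply]
        simp only [sub_re, mul_re, re_ofNat, im_ofNat, ofReal_re, ofReal_im]
        ring

end UnitDisc

theorem Convex.exists_norm_eq_one_re_mul_sub_lt_infDist_frontier {C : Set ℂ}
    (hconv : Convex ℝ C) (hopen : IsOpen C) (hne : C ≠ Set.univ) {w : ℂ} (hw : w ∈ C) :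
    ∃ κ : ℂ, ‖κ‖ = 1 ∧ ∀ c ∈ C, (κ * (c - w)).re < infDist w (frontier C) := by
  obtain ⟨w', hw'_frontier, hdist⟩ := isClosed_frontier.exists_infDist_eq_dist
    (nonempty_frontier_iff.2 ⟨⟨w, hw⟩, hne⟩) w
  have hw' : w' ∉ C := (hopen.frontier_eq ▸ hw'_frontier).2
  obtain ⟨φ, hφ⟩ := RCLike.geometric_hahn_banach_open_point (𝕜 := ℂ) hconv hopen hw'
  have hφ_apply : ∀ z, φ z = φ 1 * z := fun z => by
    rw [mul_comm, ← smul_eq_mul, ← map_smul, smul_eq_mul, mul_one]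
  have hφ1 : φ 1 ≠ 0 := fun h => by simpa [hφ_apply w, hφ_apply w', h] using hφ w hw
  have hre : ∀ z, ((‖φ 1‖⁻¹ : ℂ) * φ 1 * z).re = ‖φ 1‖⁻¹ * (φ z).re := fun z => by
    rw [hφ_apply z, mul_assoc, ← ofReal_inv, re_ofReal_mul]
  refine ⟨(‖φ 1‖⁻¹ : ℂ) * φ 1, by simp [hφ1], fun c hc => ?_⟩
  have hpos : 0 < ‖φ 1‖⁻¹ := by positivity
  calc ((‖φ 1‖⁻¹ : ℂ) * φ 1 * (c - w)).re = ‖φ 1‖⁻¹ * ((φ c).re - (φ w).re) := by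
        rw [hre, map_sub, sub_re]
    _ < ‖φ 1‖⁻¹ * ((φ w').re - (φ w).re) := by gcongr; exact hφ c hc
    _ = ((‖φ 1‖⁻¹ : ℂ) * φ 1 * (w' - w)).re := by rw [hre, map_sub, sub_re]
    _ ≤ ‖(‖φ 1‖⁻¹ : ℂ) * φ 1 * (w' - w)‖ := re_le_norm _
    _ = infDist w (frontier C) := by simp [hφ1, hdist, dist_eq_norm']

theorem norm_coeff_le_two_mul_infDist_frontier {g : ℂ → ℂ} {q : FormalMultilinearSeries ℂ ℂ ℂ}
    {C : Set ℂ} (hconv : Convex ℝ C) (hopen : IsOpen C) (hne : C ≠ Set.univ)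
    (hg : DiffContOnCl ℂ g (ball 0 1)) (hq : HasFPowerSeriesAt g q 0)
    (hgC : Set.MapsTo g (closedBall 0 1) C) {n : ℕ} (hn : n ≠ 0) :
    ‖q.coeff n‖ ≤ 2 * infDist (g 0) (frontier C) := by
  obtain ⟨κ, hκ, hκC⟩ := hconv.exists_norm_eq_one_re_mul_sub_lt_infDist_frontier hopen hne
    (hgC (mem_closedBall_self zero_le_one))
  have hre : ∀ z ∈ sphere (0 : ℂ) 1,
      ((κ • g) z).re ≤ (κ * g 0).re + infDist (g 0) (frontier C) := fun z hz => by
    have := hκC _ (hgC (sphere_subset_closedBall hz))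
    rw [mul_sub, sub_re] at this
    rw [Pi.smul_apply, smul_eq_mul]
    linarith
  have := norm_coeff_le_two_mul_sub_re (hg.const_smul κ) hq.const_smul hre hn
  have hcoeff_smul : (κ • q).coeff n = κ * q.coeff n := rfl
  rw [hcoeff_smul, norm_mul, hκ, one_mul, Pi.smul_apply, smul_eq_mul] at this
  linarith

theorem FormalMultilinearSeries.summable_and_tsum_norm_apply_third_le {𝕜 E F : Type*} [RCLike 𝕜]
    [NormedAddCommGroup E] [NormedSpace 𝕜 E] [NormedAddCommGroup F] [NormedSpace 𝕜 F]
    (p : FormalMultilinearSeries 𝕜 E F) {y : E} {d : ℝ}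
    (hp : ∀ n ≠ 0, ‖p n (fun _ => y)‖ ≤ 2 * d) :
    Summable (fun m : ℕ => ‖p (m + 1) (fun _ => (1 / 3 : 𝕜) • y)‖) ∧
      ∑' m : ℕ, ‖p (m + 1) (fun _ => (1 / 3 : 𝕜) • y)‖ ≤ d := by
  have hterm : ∀ m : ℕ, ‖p (m + 1) (fun _ => (1 / 3 : 𝕜) • y)‖ ≤ 2 * d / 3 * (1 / 3) ^ m := by
    intro m
    rw [(p (m + 1)).map_smul_univ (fun _ => 1 / 3) (fun _ => y), norm_smul, Finset.prod_const,
      Finset.card_univ, Fintype.card_fin, norm_pow, pow_succ]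
    have h3 : ‖(1 / 3 : 𝕜)‖ = 1 / 3 := by simp
    rw [h3]
    nlinarith [hp (m + 1) m.succ_ne_zero, pow_pos (by norm_num : (0 : ℝ) < 1 / 3) m]
  have hgeom : HasSum (fun m : ℕ => 2 * d / 3 * (1 / 3 : ℝ) ^ m) d := by
    have := (hasSum_geometric_of_lt_one (r := (1 / 3 : ℝ)) (by norm_num) (by norm_num)).mul_left
      (2 * d / 3)
    rwa [show 2 * d / 3 * (1 - 1 / 3)⁻¹ = d by ring] at this
  have hsum := hgeom.summable.of_nonneg_of_le (fun _ => norm_nonneg _) hterm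
  exact ⟨hsum, (hsum.tsum_le_tsum hterm hgeom.summable).trans hgeom.tsum_eq.le⟩

theorem bohr_convex_general {X : Type*} [NormedAddCommGroup X] [NormedSpace ℂ X]
    (G : Set X)
    (hGbal : ∀ z : ℂ, ‖z‖ ≤ 1 → z • G ⊆ G)
    (C : Set ℂ) (hCopen : IsOpen C)
    (hCconv : Convex ℝ C) (hCne : C ≠ Set.univ)
    (f : X → ℂ) (hf : DifferentiableOn ℂ f G)
    (hmaps : Set.MapsTo f G C)
    (p : FormalMultilinearSeries ℂ X ℂ) (hp : HasFPowerSeriesAt f p 0)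
    (x : X) (hx : x ∈ (1 / 3 : ℂ) • G) :
    Summable (fun m : ℕ => ‖p (m + 1) (fun _ => x)‖) ∧
      ∑' m : ℕ, ‖p (m + 1) (fun _ => x)‖ ≤ Metric.infDist (f 0) (frontier C) := by
  obtain ⟨y, hyG, rfl⟩ := hx
  set u : ℂ →L[ℂ] X := (ContinuousLinearMap.id ℂ ℂ).smulRight y
  have hu : closedBall 0 1 ⊆ u ⁻¹' G := fun z hz =>
    balanced_iff_smul_mem.1 hGbal (mem_closedBall_zero_iff.1 hz) hyG
  have hg : DiffContOnCl ℂ (f ∘ u) (ball 0 1) :=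
    (hf.comp u.differentiableOn (Set.mapsTo_preimage _ _)).diffContOnCl_ball hu
  have hq : HasFPowerSeriesAt (f ∘ u) (p.compContinuousLinearMap u) 0 := by
    rw [← map_zero u] at hp
    exact hp.compContinuousLinearMap
  have hcoeff : ∀ n, (p.compContinuousLinearMap u).coeff n = p n (fun _ => y) := fun n => by
    change p n (fun _ => (1 : ℂ) • y) = _
    rw [one_smul]
  refine p.summable_and_tsum_norm_apply_third_le fun n hn => ?_
  have := norm_coeff_le_two_mul_infDist_frontier hCconv hCopen hCne hg hq (hmaps.comp hu) hn
  rwa [hcoeff, Function.comp_apply, map_zero] at this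

/-- Bohr's theorem for holomorphic maps from a bounded balanced domain `G` in a
complex Banach space into a convex domain `C ⊊ ℂ`: for `x ∈ (1/3)·G`, the Bohr
sum of the nonconstant terms is bounded by the distance `d(f(0), ∂C)`. -/
theorem bohr_convex {X : Type*} [NormedAddCommGroup X] [NormedSpace ℂ X]
    [CompleteSpace X]
    (G : Set X) (hGopen : IsOpen G) (hGconn : IsConnected G)
    (hGbdd : Bornology.IsBounded G)
    (hGbal : ∀ z : ℂ, ‖z‖ ≤ 1 → z • G ⊆ G)
    (C : Set ℂ) (hCopen : IsOpen C) (hCconn : IsConnected C)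
    (hCconv : Convex ℝ C) (hCne : C ≠ Set.univ)
    (f : X → ℂ) (hf : DifferentiableOn ℂ f G)
    (hmaps : Set.MapsTo f G C)
    (p : FormalMultilinearSeries ℂ X ℂ) (hp : HasFPowerSeriesAt f p 0)
    (x : X) (hx : x ∈ (1 / 3 : ℂ) • G) :
    Summable (fun m : ℕ => ‖p (m + 1) (fun _ => x)‖) ∧
      ∑' m : ℕ, ‖p (m + 1) (fun _ => x)‖ ≤ Metric.infDist (f 0) (frontier C) :=
  bohr_convex_general G hGbal C hCopen hCconv hCne f hf hmaps p hp x hx
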